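/- arXiv:2206.14936 — 13 statements merged into one kernel-verified Lean document; each statement's English description precedes it below -/
import Mathlib

section
/- If I is a non-meager ideal on ω (as a subset of the Cantor space P(ω)), then I is Shelah-Steprāns: for every set X of non-empty finite subsets of ω, if for every A ∈ I there exists s ∈ X with s ∩ A = ∅, then there is an infinite Y ⊆ X with ⋃Y ∈ I. -/
/-- An ideal on a countable set: closed under subsets and finite unions,
contains all finite sets, and is proper. -/
def IsIdealOn {α : Type*} (I : Set (Set α)) : Prop :=
  (∀ A ∈ I, ∀ B : Set α, B ⊆ A → B ∈ I) ∧
  (∀ A ∈ I, ∀ B ∈ I, A ∪ B ∈ I) ∧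
  (∀ A : Set α, A.Finite → A ∈ I) ∧
  Set.univ ∉ I

/-- The Shelah-Steprāns property of an ideal. -/
def ShelahSteprans {α : Type*} (I : Set (Set α)) : Prop :=
  ∀ X : Set (Set α),
    (∀ s ∈ X, s.Finite ∧ s.Nonempty) →
    (∀ A ∈ I, ∃ s ∈ X, s ∩ A = ∅) →
    ∃ Y ⊆ X, Y.Infinite ∧ ⋃₀ Y ∈ I

/-- Every non-meager ideal on ω (viewed as a subset of the Cantor space `ℕ → Bool`
via characteristic functions) is Shelah-Steprāns. -/
theorem nonmeager_ideal_shelahSteprans (I : Set (Set ℕ)) (hI : IsIdealOn I)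
    (hnm : ¬ IsMeagre {x : ℕ → Bool | {n : ℕ | x n = true} ∈ I}) :
    ShelahSteprans I := by
  classical
  intro X hX hdisj
  -- the dense open sets
  set D : ℕ → Set (ℕ → Bool) := fun n =>
    {x | ∃ s ∈ X, (∀ i ∈ s, x i = true) ∧ ∀ i ∈ s, n ≤ i} with hD
  have hDopen : ∀ n, IsOpen (D n) := by
    intro n
    have heq : D n = ⋃ s ∈ {s ∈ X | ∀ i ∈ s, n ≤ i},
        ⋂ i ∈ s, {x : ℕ → Bool | x i = true} := by
      ext x
      simp only [hD, Set.mem_setOf_eq, Set.mem_iUnion, Set.mem_iInter, Set.mem_sep_iff]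
      tauto
    rw [heq]
    refine isOpen_biUnion fun s hs => ?_
    refine Set.Finite.isOpen_biInter (hX s hs.1).1 fun i _ => ?_
    have h2 : {x : ℕ → Bool | x i = true} = (fun x : ℕ → Bool => x i) ⁻¹' {true} := rfl
    rw [h2]
    exact (isOpen_discrete ({true} : Set Bool)).preimage (continuous_apply i)
  have hDdense : ∀ n, Dense (D n) := by
    intro n
    rw [dense_iff_inter_open]
    intro U hU hUne
    obtain ⟨x, hx⟩ := hUne
    obtain ⟨F, u, hFu, hsub⟩ := isOpen_pi_iff.mp hU x hx
    set B : Set ℕ := (↑F : Set ℕ) ∪ Set.Iio n with hB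
    have hBfin : B.Finite := (F.finite_toSet).union (Set.finite_Iio n)
    obtain ⟨s, hsX, hsd⟩ := hdisj B (hI.2.2.1 B hBfin)
    have hsB : ∀ i ∈ s, i ∉ B := by
      intro i hi hiB
      have : i ∈ s ∩ B := ⟨hi, hiB⟩
      rw [hsd] at this
      exact this
    set y : ℕ → Bool := fun i => if i ∈ s then true else x i with hy
    refine ⟨y, ?_, ?_⟩
    · apply hsub
      intro i hi
      have hiF : i ∈ F := hi
      have : i ∉ s := fun h => hsB i h (Or.inl hiF)
      simp only [hy, if_neg this]
      exact (hFu i hiF).2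
    · refine ⟨s, hsX, fun i hi => by simp only [hy]; rw [if_pos hi], fun i hi => ?_⟩
      have : i ∉ Set.Iio n := fun h => hsB i hi (Or.inr h)
      simpa using this
  have hres : (⋂ n, D n) ∈ residual (ℕ → Bool) :=
    countable_iInter_mem.mpr fun n => residual_of_dense_open (hDopen n) (hDdense n)
  -- the non-meager ideal meets the comeager set
  obtain ⟨x, hxT, hxC⟩ :
      ∃ x, x ∈ {x : ℕ → Bool | {n : ℕ | x n = true} ∈ I} ∧ x ∈ ⋂ n, D n := by
    by_contra h
    push_neg at h
    apply hnm
    have hsub : {x : ℕ → Bool | {n : ℕ | x n = true} ∈ I} ⊆ (⋂ n, D n)ᶜ :=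
      fun x hx hxC => h x hx hxC
    have : IsMeagre ((⋂ n, D n)ᶜ) := by
      unfold IsMeagre
      rwa [compl_compl]
    exact this.mono hsub
  set A : Set ℕ := {n : ℕ | x n = true} with hA
  have hAI : A ∈ I := hxT
  refine ⟨{s ∈ X | s ⊆ A}, Set.sep_subset _ _, ?_, ?_⟩
  · -- infinite
    intro hfin
    have hUfin : (⋃₀ {s ∈ X | s ⊆ A}).Finite :=
      Set.Finite.sUnion hfin fun s hs => (hX s hs.1).1
    obtain ⟨N, hN⟩ := hUfin.bddAbove
    have hxD := Set.mem_iInter.mp hxC (N + 1)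
    obtain ⟨s, hsX, hsA, hshigh⟩ := hxD
    have hsY : s ∈ {s ∈ X | s ⊆ A} := ⟨hsX, fun i hi => hsA i hi⟩
    obtain ⟨m, hm⟩ := (hX s hsX).2
    have h1 : m ≤ N := hN ⟨s, hsY, hm⟩
    have h2 : N + 1 ≤ m := hshigh m hm
    omega
  · -- union in I
    refine hI.1 A hAI _ ?_
    intro i hi
    obtain ⟨s, hs, his⟩ := hi
    exact hs.2 his
end

section
/- The ideal fin×fin on ω×ω is Shelah-Steprāns: for every set X of non-empty finite subsets of ω×ω such that every A ∈ fin×fin misses some element of X, there is an infinite Y ⊆ X with ⋃Y ∈ fin×fin. -/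
/-- The ideal fin×fin on ω×ω: sets all but finitely many of whose vertical
sections are finite. -/
def finTimesFin : Set (Set (ℕ × ℕ)) :=
  {A | {n : ℕ | {m : ℕ | (n, m) ∈ A}.Infinite}.Finite}

/-- fin×fin is Shelah-Steprāns. -/
theorem finTimesFin_shelahSteprans : ShelahSteprans finTimesFin := by
  intro X hX hmeet
  -- For each N, the strip of columns ≤ N is in the ideal.
  have hA : ∀ N : ℕ, {p : ℕ × ℕ | p.1 ≤ N} ∈ finTimesFin := by
    intro N
    apply (Set.finite_Iic N).subset
    intro n hn
    obtain ⟨m, hm⟩ := hn.nonempty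
    exact hm
  -- For each N, pick an element of X living entirely in columns > N.
  have hF : ∀ N : ℕ, ∃ s, s ∈ X ∧ ∀ p ∈ s, N < p.1 := by
    intro N
    obtain ⟨s, hsX, hdisj⟩ := hmeet _ (hA N)
    refine ⟨s, hsX, fun p hp => ?_⟩
    by_contra h
    push_neg at h
    have : p ∈ s ∩ {p : ℕ × ℕ | p.1 ≤ N} := ⟨hp, h⟩
    rw [hdisj] at this
    exact this
  choose F hFX hFgt using hF
  -- A bound on the columns used by F N.
  have hB : ∀ N : ℕ, ∃ M, ∀ p ∈ F N, p.1 ≤ M := by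
    intro N
    obtain ⟨M, hM⟩ := ((hX _ (hFX N)).1.image Prod.fst).bddAbove
    exact ⟨M, fun p hp => hM ⟨p, hp, rfl⟩⟩
  choose B hBle using hB
  -- The recursive bounds.
  set b : ℕ → ℕ := fun k => Nat.rec 0 (fun _ bk => max bk (B bk) + 1) k with hb
  have hbsucc : ∀ k, b (k + 1) = max (b k) (B (b k)) + 1 := fun k => rfl
  have hbmono : StrictMono b := by
    apply strictMono_nat_of_lt_succ
    intro k
    rw [hbsucc]
    exact Nat.lt_succ_of_le (le_max_left _ _)
  have hble : ∀ k, k ≤ b k := fun k => hbmono.le_apply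
  -- Columns in F (b k) are below b (k+1).
  have hcol : ∀ k, ∀ p ∈ F (b k), p.1 < b (k + 1) := by
    intro k p hp
    rw [hbsucc]
    exact Nat.lt_succ_of_le (le_trans (hBle _ p hp) (le_max_right _ _))
  -- The sequence of picks.
  have hinj : Function.Injective (fun k => F (b k)) := by
    intro j k hjk
    simp only at hjk
    by_contra hne
    rcases Nat.lt_or_ge j k with h | h
    · obtain ⟨p, hp⟩ := (hX _ (hFX (b k))).2
      have h1 : b k < p.1 := hFgt _ p hp
      have h2 : p ∈ F (b j) := by rw [hjk]; exact hp
      have h3 : p.1 < b (j + 1) := hcol j p h2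
      have h4 : b (j + 1) ≤ b k := hbmono.monotone h
      omega
    · have h' : k < j := lt_of_le_of_ne h (Ne.symm hne)
      obtain ⟨p, hp⟩ := (hX _ (hFX (b j))).2
      have h1 : b j < p.1 := hFgt _ p hp
      have h2 : p ∈ F (b k) := by rw [← hjk]; exact hp
      have h3 : p.1 < b (k + 1) := hcol k p h2
      have h4 : b (k + 1) ≤ b j := hbmono.monotone h'
      omega
  refine ⟨Set.range (fun k => F (b k)), ?_, ?_, ?_⟩
  · rintro s ⟨k, rfl⟩
    exact hFX (b k)
  · exact Set.infinite_range_of_injective hinj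
  · -- every column of the union is finite
    have key : ∀ n : ℕ, {m : ℕ | (n, m) ∈ ⋃₀ Set.range (fun k => F (b k))}.Finite := by
      intro n
      have hT : (⋃ k ∈ Finset.range n, F (b k)).Finite := by
        apply Set.Finite.biUnion (Finset.range n).finite_toSet
        intro k _
        exact (hX _ (hFX (b k))).1
      apply (hT.image Prod.snd).subset
      intro m hm
      obtain ⟨t, ⟨k, rfl⟩, hmt⟩ := hm
      have hkn : k < n := by
        have h1 : b k < n := hFgt _ _ hmt
        have h2 : k ≤ b k := hble k
        omega
      exact ⟨(n, m), Set.mem_biUnion (Finset.mem_range.mpr hkn) hmt, rfl⟩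
    have : {n : ℕ | {m : ℕ | (n, m) ∈ ⋃₀ Set.range (fun k => F (b k))}.Infinite} = ∅ := by
      ext n
      simp only [Set.mem_setOf_eq, Set.mem_empty_iff_false, iff_false]
      exact fun h => h (key n)
    show {n : ℕ | _}.Finite
    rw [this]
    exact Set.finite_empty
end

section
/- The Shelah-Steprāns property is upward closed in the Katětov order: if I and J are ideals on ω, I is Shelah-Steprāns, and I ≤_K J, then J is Shelah-Steprāns. -/
/-- `I ≤_K J`: there is a Katětov morphism from `(β, J)` to `(α, I)`, i.e. a map
`f : β → α` with `f ⁻¹' A ∈ J` for every `A ∈ I`. -/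
def KatetovLE {α β : Type*} (I : Set (Set α)) (J : Set (Set β)) : Prop :=
  ∃ f : β → α, ∀ A ∈ I, f ⁻¹' A ∈ J

/-- The Shelah-Steprāns property is upward closed in the Katětov order. -/
theorem shelahSteprans_katetov_upward (I J : Set (Set ℕ))
    (hI : IsIdealOn I) (hJ : IsIdealOn J)
    (hss : ShelahSteprans I) (hK : KatetovLE I J) :
    ShelahSteprans J := by
  obtain ⟨f, hf⟩ := hK
  intro X hXfin hXmeet
  -- push X forward along f
  set X' : Set (Set ℕ) := (fun s => f '' s) '' X with hX'
  have hX'fin : ∀ s ∈ X', s.Finite ∧ s.Nonempty := by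
    rintro _ ⟨s, hs, rfl⟩
    exact ⟨(hXfin s hs).1.image f, (hXfin s hs).2.image f⟩
  have hX'meet : ∀ A ∈ I, ∃ s ∈ X', s ∩ A = ∅ := by
    intro A hA
    obtain ⟨s, hsX, hs⟩ := hXmeet (f ⁻¹' A) (hf A hA)
    refine ⟨f '' s, ⟨s, hsX, rfl⟩, ?_⟩
    ext y
    simp only [Set.mem_inter_iff, Set.mem_image, Set.mem_empty_iff_false, iff_false]
    rintro ⟨⟨x, hxs, rfl⟩, hyA⟩
    have : x ∈ s ∩ f ⁻¹' A := ⟨hxs, hyA⟩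
    rw [hs] at this
    exact this
  obtain ⟨Y', hY'X', hY'inf, hY'I⟩ := hss X' hX'fin hX'meet
  refine ⟨{s ∈ X | f '' s ∈ Y'}, fun s hs => hs.1, ?_, ?_⟩
  · have himg : Y' ⊆ (fun s => f '' s) '' {s ∈ X | f '' s ∈ Y'} := by
      intro t ht
      obtain ⟨s, hsX, rfl⟩ := hY'X' ht
      exact ⟨s, ⟨hsX, ht⟩, rfl⟩
    exact Set.Infinite.of_image _ (hY'inf.mono himg)
  · refine hJ.1 _ (hf _ hY'I) _ ?_
    rintro x ⟨s, hs, hxs⟩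
    exact Set.mem_sUnion.2 ⟨f '' s, hs.2, ⟨x, hxs, rfl⟩⟩
end

section
/- If an ideal I on ω is not Shelah-Steprāns, then there is an F_σ set F ⊆ P(ω) (in Cantor space) such that I ⊆ F and F ∩ I* = ∅, where I* is the dual filter of I. -/
/-- If an ideal `I` on ω is not Shelah-Steprāns, then there is an F_σ subset
`F` of the Cantor space `ℕ → Bool` (identified with `P(ω)` via characteristic
functions) containing `I` and disjoint from the dual filter `I*`. -/
theorem not_shelahSteprans_Fsigma_separation (I : Set (Set ℕ))
    (hI : IsIdealOn I) (h : ¬ ShelahSteprans I) :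
    ∃ F : Set (ℕ → Bool),
      (∃ C : ℕ → Set (ℕ → Bool), (∀ n, IsClosed (C n)) ∧ F = ⋃ n, C n) ∧
      {x : ℕ → Bool | {n : ℕ | x n = true} ∈ I} ⊆ F ∧
      F ∩ {x : ℕ → Bool | {n : ℕ | x n = true}ᶜ ∈ I} = ∅ := by
  obtain ⟨hdown, hunion, hfin, hproper⟩ := hI
  unfold ShelahSteprans at h
  push_neg at h
  obtain ⟨X, hXfin, hXhit, hXno⟩ := h
  -- X is infinite
  have hXinf : X.Infinite := by
    intro hX
    have hUfin : (⋃₀ X).Finite := hX.sUnion fun s hs => (hXfin s hs).1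
    obtain ⟨s, hsX, hs⟩ := hXhit _ (hfin _ hUfin)
    obtain ⟨m, hm⟩ := (hXfin s hsX).2
    have : m ∈ ⋃₀ X := ⟨s, hsX, hm⟩
    have : m ∈ s ∩ ⋃₀ X := ⟨hm, this⟩
    rw [hs] at this
    exact this
  -- X is countable
  have hXcnt : X.Countable := by
    have : X ⊆ {t : Set ℕ | t.Finite ∧ t ⊆ Set.univ} := fun s hs =>
      ⟨(hXfin s hs).1, Set.subset_univ s⟩
    exact (Set.countable_setOf_finite_subset Set.countable_univ).mono this
  -- enumerate X injectively
  obtain ⟨f, hfinj, hfran⟩ : ∃ f : ℕ → Set ℕ, Function.Injective f ∧ Set.range f = X := by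
    have : Countable X := hXcnt.to_subtype
    have : Infinite X := hXinf.to_subtype
    have e : ℕ ≃ X := (nonempty_equiv_of_countable).some
    exact ⟨fun n => (e n : Set ℕ), fun a b hab => e.injective (Subtype.ext hab), by
      ext s
      simp only [Set.mem_range]
      constructor
      · rintro ⟨n, rfl⟩; exact (e n).2
      · intro hs; exact ⟨e.symm ⟨s, hs⟩, by simp⟩⟩
  -- the closed sets
  set C : ℕ → Set (ℕ → Bool) :=
    fun n => {x | ∀ k, n ≤ k → ∃ m ∈ f k, x m = false} with hC
  refine ⟨⋃ n, C n, ⟨C, ?_, rfl⟩, ?_, ?_⟩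
  · -- each C n is closed
    intro n
    have : C n = ⋂ k, ⋂ (_ : n ≤ k), ⋃ m ∈ f k, {x : ℕ → Bool | x m = false} := by
      ext x
      simp [hC]
    rw [this]
    refine isClosed_iInter fun k => isClosed_iInter fun _ => ?_
    refine Set.Finite.isClosed_biUnion (hXfin _ (hfran ▸ Set.mem_range_self k)).1 fun m _ => ?_
    show IsClosed ((fun x : ℕ → Bool => x m) ⁻¹' {false})
    exact IsClosed.preimage (continuous_apply m) isClosed_singleton
  · -- I ⊆ F
    intro x hx
    set A := {n : ℕ | x n = true} with hA
    have hS : {k : ℕ | f k ⊆ A}.Finite := by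
      by_contra hSinf
      have hSinf' : {k : ℕ | f k ⊆ A}.Infinite := hSinf
      refine hXno (f '' {k | f k ⊆ A}) ?_ (hSinf'.image (hfinj.injOn)) ?_
      · rintro s ⟨k, _, rfl⟩; exact hfran ▸ Set.mem_range_self k
      · refine hdown A hx _ ?_
        rintro m ⟨s, ⟨k, hk, rfl⟩, hm⟩
        exact hk hm
    obtain ⟨n, hn⟩ := hS.bddAbove
    refine Set.mem_iUnion.mpr ⟨n + 1, fun k hk => ?_⟩
    have hknot : ¬ f k ⊆ A := fun hsub => by
      have := hn hsub
      omega
    obtain ⟨m, hm, hmA⟩ := Set.not_subset.mp hknot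
    exact ⟨m, hm, by simpa [hA] using hmA⟩
  · -- F ∩ I* = ∅
    ext x
    simp only [Set.mem_inter_iff, Set.mem_iUnion, Set.mem_empty_iff_false, iff_false,
      not_and, Set.mem_setOf_eq]
    rintro ⟨n, hxn⟩ hcomp
    set A := {n : ℕ | x n = true} with hA
    -- B = Aᶜ ∪ (union of f j, j < n) ∈ I
    have hB : Aᶜ ∪ ⋃ j ∈ Finset.range n, f j ∈ I := by
      refine hunion _ hcomp _ (hfin _ ?_)
      exact Set.Finite.biUnion (Finset.range n).finite_toSet
        fun j _ => (hXfin _ (hfran ▸ Set.mem_range_self j)).1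
    obtain ⟨s, hsX, hs⟩ := hXhit _ hB
    obtain ⟨k, rfl⟩ := hfran ▸ hsX
    have hsne := (hXfin _ hsX).2
    -- k ≥ n
    have hkn : n ≤ k := by
      by_contra hlt
      push_neg at hlt
      obtain ⟨m, hm⟩ := hsne
      have : m ∈ f k ∩ (Aᶜ ∪ ⋃ j ∈ Finset.range n, f j) :=
        ⟨hm, Or.inr (Set.mem_biUnion (Finset.mem_range.mpr hlt) hm)⟩
      rw [hs] at this
      exact this
    -- f k ⊆ A
    have hsubA : f k ⊆ A := by
      intro m hm
      by_contra hmA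
      have : m ∈ f k ∩ (Aᶜ ∪ ⋃ j ∈ Finset.range n, f j) := ⟨hm, Or.inl hmA⟩
      rw [hs] at this
      exact this
    obtain ⟨m, hm, hmf⟩ := hxn k hkn
    have : x m = true := hsubA hm
    rw [this] at hmf
    simp at hmf
end

section
/- If there is an F_σ set F ⊆ P(ω) with I ⊆ F and F ∩ I* = ∅, then Player II has a winning strategy in the Laflamme game L(I): at round n, Player I plays A_n ∈ I and Player II responds with a finite set s_n ⊆ ω \ A_n; Player II wins if ⋃_n s_n ∈ I^+. -/
/-- Key escape lemma: given a closed set `C` disjoint from the dual filter,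
a current finite configuration and a move `A ∈ I` of Player I, Player II can
extend so that the resulting initial segment forces exit from `C`. -/
lemma key_lemma {I : Set (Set ℕ)} (hI : IsIdealOn I) (C : Set (ℕ → Bool)) (hC : IsClosed C)
    (hd : ∀ x ∈ C, {n | x n = true}ᶜ ∉ I)
    (s : Set ℕ) (m : ℕ) (A : Set ℕ) (hA : A ∈ I) :
    ∃ m', m ≤ m' ∧ ∀ x : ℕ → Bool,
      (∀ k < m', (x k = true ↔ k ∈ s ∪ (Set.Ico m m' \ A))) → x ∉ C := by
  classical
  by_contra h
  push_neg at h
  choose x hx hxC using fun j : ℕ => h (m + j) (Nat.le_add_right m j)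
  set y : ℕ → Bool := fun k => decide (k ∈ s ∪ (Set.Ici m \ A)) with hy
  have hten : Filter.Tendsto x Filter.atTop (nhds y) := by
    rw [tendsto_pi_nhds]
    intro k
    refine tendsto_const_nhds.congr' ?_
    filter_upwards [Filter.eventually_ge_atTop (k + 1)] with j hj
    have hk : k < m + j := lt_of_lt_of_le (Nat.lt_of_lt_of_le (Nat.lt_succ_self k) hj)
      (Nat.le_add_left j m)
    have h1 := hx j k hk
    have h2 : (y k = true) ↔ (x j k = true) := by
      rw [h1, hy]
      simp only [decide_eq_true_eq, Set.mem_union, Set.mem_diff, Set.mem_Ici, Set.mem_Ico]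
      constructor
      · rintro (h' | ⟨h2', h3'⟩)
        · exact Or.inl h'
        · exact Or.inr ⟨⟨h2', hk⟩, h3'⟩
      · rintro (h' | ⟨⟨h2', _⟩, h3'⟩)
        · exact Or.inl h'
        · exact Or.inr ⟨h2', h3'⟩
    exact Bool.coe_iff_coe.mp h2
  have hyC : y ∈ C := hC.mem_of_tendsto hten (Filter.Eventually.of_forall hxC)
  refine hd y hyC (hI.1 (Set.Iio m ∪ A) (hI.2.1 _ (hI.2.2.1 _ (Set.finite_Iio m)) _ hA) _ ?_)
  intro k hk
  simp only [Set.mem_compl_iff, Set.mem_setOf_eq, hy, decide_eq_true_eq, Set.mem_union,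
    Set.mem_diff, Set.mem_Ici, Set.mem_Iio] at hk ⊢
  push_neg at hk
  by_cases hkm : k < m
  · exact Or.inl hkm
  · exact Or.inr (hk.2 (Nat.le_of_not_lt hkm))

/-- The state of Player II's strategy after processing a history of moves:
first component is the union of Player II's moves so far, second component
is the current bound on an initial segment of `ℕ`. -/
def gameState (pick : ℕ → Set ℕ → ℕ → Set ℕ → ℕ) (B : ℕ → Set ℕ) : ℕ → Set ℕ × ℕ
  | 0 => (∅, 0)
  | n + 1 =>
    let p := gameState pick B n
    (p.1 ∪ (Set.Ico p.2 (pick n p.1 p.2 (B n)) \ B n), pick n p.1 p.2 (B n))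

lemma gameState_congr (pick : ℕ → Set ℕ → ℕ → Set ℕ → ℕ) :
    ∀ (n : ℕ) (B1 B2 : ℕ → Set ℕ), (∀ i < n, B1 i = B2 i) →
      gameState pick B1 n = gameState pick B2 n := by
  intro n
  induction n with
  | zero => intro B1 B2 _; rfl
  | succ k ih =>
    intro B1 B2 h
    have hk : gameState pick B1 k = gameState pick B2 k :=
      ih B1 B2 fun i hi => h i (Nat.lt_succ_of_lt hi)
    simp only [gameState, hk, h k (Nat.lt_succ_self k)]

/-- If there is an F_σ set (in Cantor space, identifying `P(ω)` with `ℕ → Bool`)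
containing `I` and disjoint from the dual filter `I*`, then Player II has a
winning strategy in the Laflamme game `L(I)`: at round `n` Player I plays
`A n ∈ I`, Player II responds (following the strategy `σ`, applied to the
history `A 0, …, A n` of Player I's moves) with a finite set disjoint from
`A n`, and the union of Player II's moves is `I`-positive. -/
theorem Fsigma_separation_playerII_winning (I : Set (Set ℕ)) (hI : IsIdealOn I)
    (F : Set (ℕ → Bool))
    (hFσ : ∃ C : ℕ → Set (ℕ → Bool), (∀ n, IsClosed (C n)) ∧ F = ⋃ n, C n)
    (hsub : {x : ℕ → Bool | {n : ℕ | x n = true} ∈ I} ⊆ F)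
    (hdisj : F ∩ {x : ℕ → Bool | {n : ℕ | x n = true}ᶜ ∈ I} = ∅) :
    ∃ σ : List (Set ℕ) → Set ℕ,
      ∀ A : ℕ → Set ℕ, (∀ n, A n ∈ I) →
        (∀ n, (σ ((List.range (n + 1)).map A)).Finite ∧
              σ ((List.range (n + 1)).map A) ∩ A n = ∅) ∧
        (⋃ n, σ ((List.range (n + 1)).map A)) ∉ I := by
  classical
  obtain ⟨C, hCcl, hFeq⟩ := hFσ
  have hd : ∀ n, ∀ x ∈ C n, {k | x k = true}ᶜ ∉ I := by
    intro n x hx hmem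
    have hxF : x ∈ F := by rw [hFeq]; exact Set.mem_iUnion.2 ⟨n, hx⟩
    exact Set.eq_empty_iff_forall_notMem.mp hdisj x ⟨hxF, hmem⟩
  have key' : ∀ (n : ℕ) (s : Set ℕ) (m : ℕ) (A : Set ℕ), ∃ m', m ≤ m' ∧
      (A ∈ I → ∀ x : ℕ → Bool,
        (∀ k < m', (x k = true ↔ k ∈ s ∪ (Set.Ico m m' \ A))) → x ∉ C n) := by
    intro n s m A
    by_cases hA : A ∈ I
    · obtain ⟨m', h1, h2⟩ := key_lemma hI (C n) (hCcl n) (hd n) s m A hA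
      exact ⟨m', h1, fun _ => h2⟩
    · exact ⟨m, le_refl m, fun h => absurd h hA⟩
  choose pick hpick1 hpick2 using key'
  refine ⟨fun l => Set.Ico (gameState pick (fun i => l.getD i ∅) (l.length - 1)).2
      (gameState pick (fun i => l.getD i ∅) l.length).2 \ l.getD (l.length - 1) ∅, ?_⟩
  intro A hA
  set s : ℕ → Set ℕ := fun n => (gameState pick A n).1 with hs
  set m : ℕ → ℕ := fun n => (gameState pick A n).2 with hm
  set t : ℕ → Set ℕ := fun n => Set.Ico (m n) (m (n + 1)) \ A n with ht
  -- the strategy applied to the actual history computes `t n`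
  have hσ : ∀ n : ℕ, (fun l => Set.Ico (gameState pick (fun i => l.getD i ∅) (l.length - 1)).2
      (gameState pick (fun i => l.getD i ∅) l.length).2 \ l.getD (l.length - 1) ∅)
      ((List.range (n + 1)).map A) = t n := by
    intro n
    have hlen : ((List.range (n + 1)).map A).length = n + 1 := by simp
    have hget : ∀ i ≤ n, ((List.range (n + 1)).map A).getD i ∅ = A i := by
      intro i hi
      rw [List.getD_eq_getElem?_getD]
      simp [List.getElem?_map, List.getElem?_range, Nat.lt_succ_of_le hi]
    have h1 : gameState pick (fun i => ((List.range (n + 1)).map A).getD i ∅) n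
        = gameState pick A n :=
      gameState_congr pick n _ _ fun i hi => hget i (Nat.le_of_lt hi)
    have h2 : gameState pick (fun i => ((List.range (n + 1)).map A).getD i ∅) (n + 1)
        = gameState pick A (n + 1) :=
      gameState_congr pick (n + 1) _ _ fun i hi => hget i (Nat.lt_succ_iff.mp hi)
    simp only [hlen, Nat.add_sub_cancel, h1, h2, hget n (le_refl n), ht, hs, hm]
  have hm_succ : ∀ n, m (n + 1) = pick n (s n) (m n) (A n) := fun n => rfl
  have hs_succ : ∀ n, s (n + 1) = s n ∪ t n := fun n => rfl
  have hmono1 : ∀ n, m n ≤ m (n + 1) := by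
    intro n; rw [hm_succ]; exact hpick1 n (s n) (m n) (A n)
  have hmono : Monotone m := monotone_nat_of_le_succ hmono1
  -- union of Player II's moves
  set U : Set ℕ := ⋃ n, t n with hU
  have htU : ∀ n, t n ⊆ U := fun n => Set.subset_iUnion t n
  have hsU : ∀ n, s n ⊆ U := by
    intro n
    induction n with
    | zero => exact fun k hk => absurd hk (Set.notMem_empty k)
    | succ k ih => rw [hs_succ]; exact Set.union_subset ih (htU k)
  have hsmono : ∀ {a b : ℕ}, a ≤ b → s a ⊆ s b := by
    intro a b hab
    induction hab with
    | refl => exact subset_rfl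
    | step _ ih => rename_i c _; exact ih.trans (by rw [hs_succ]; exact Set.subset_union_left)
  have hUcap : ∀ n, ∀ k < m (n + 1), (k ∈ U ↔ k ∈ s (n + 1)) := by
    intro n k hk
    constructor
    · intro hkU
      obtain ⟨j, hj⟩ := Set.mem_iUnion.mp hkU
      rcases le_or_gt j n with hjn | hjn
      · have : t j ⊆ s (j + 1) := by rw [hs_succ]; exact Set.subset_union_right
        exact hsmono (Nat.succ_le_succ hjn) (this hj)
      · exfalso
        have : m (n + 1) ≤ m j := hmono hjn
        have : m (n + 1) ≤ k := le_trans this hj.1.1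
        omega
    · intro hks
      exact hsU (n + 1) hks
  refine ⟨?_, ?_⟩
  · intro n
    rw [hσ n]
    constructor
    · exact (Set.finite_Ico _ _).subset Set.diff_subset
    · ext k
      simp only [ht, Set.mem_inter_iff, Set.mem_diff, Set.mem_empty_iff_false, iff_false,
        not_and]
      tauto
  · simp only [hσ]
    intro hUI
    set x : ℕ → Bool := fun k => decide (k ∈ U) with hx
    have hxset : {k | x k = true} = U := by
      ext k; simp [hx]
    have hxF : x ∈ F := hsub (by rw [Set.mem_setOf_eq, hxset]; exact hUI)
    rw [hFeq] at hxF
    obtain ⟨n, hn⟩ := Set.mem_iUnion.mp hxF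
    refine hpick2 n (s n) (m n) (A n) (hA n) x ?_ hn
    intro k hk
    have hk' : k < m (n + 1) := by rwa [hm_succ]
    have heq : k ∈ s n ∪ (Set.Ico (m n) (pick n (s n) (m n) (A n)) \ A n) ↔ k ∈ s (n + 1) := by
      rw [hs_succ n]
      simp only [ht]
      rw [hm_succ n]
    rw [heq, hx]
    simp only [decide_eq_true_eq]
    exact hUcap n k hk'
end

section
/- Every Shelah-Steprāns ideal on ω is tight: for every countable family {X_n : n ∈ ω} of I-positive sets there is A ∈ I such that A ∩ X_n ≠ ∅ for every n. -/
/-- An ideal is tight if for every countable family of `I`-positive sets there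
is a single member of `I` meeting all of them. -/
def Tight {α : Type*} (I : Set (Set α)) : Prop :=
  ∀ X : ℕ → Set α, (∀ n, X n ∉ I) → ∃ A ∈ I, ∀ n, (A ∩ X n).Nonempty

/-- Every Shelah-Steprāns ideal is tight. -/
theorem shelahSteprans_tight (I : Set (Set ℕ)) (hI : IsIdealOn I)
    (hss : ShelahSteprans I) : Tight I := by
  obtain ⟨hdown, hunion, hfin, huniv⟩ := hI
  intro X hX
  by_contra hcon
  push_neg at hcon
  have hmiss : ∀ A ∈ I, ∃ n, A ∩ X n = ∅ := hcon
  set 𝒳 : Set (Set ℕ) :=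
    { F | ∃ n l : ℕ, F ⊆ Set.Iic l ∧ (∀ m ≤ n, (F ∩ X m).Nonempty) ∧
        X n ∩ Set.Iic l ⊆ F } with h𝒳def
  have hmem : ∀ s ∈ 𝒳, s.Finite ∧ s.Nonempty := by
    rintro s ⟨n, l, hsub, hmeets, -⟩
    refine ⟨(Set.finite_Iic l).subset hsub, ?_⟩
    obtain ⟨y, hy⟩ := hmeets 0 (Nat.zero_le n)
    exact ⟨y, hy.1⟩
  have havoid : ∀ A ∈ I, ∃ s ∈ 𝒳, s ∩ A = ∅ := by
    intro A hA
    obtain ⟨n, hn⟩ := hmiss A hA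
    have hpos : ∀ m : ℕ, (X m \ A).Nonempty := by
      intro m
      rw [Set.nonempty_iff_ne_empty]
      intro hempty
      exact hX m (hdown A hA (X m) (Set.diff_eq_empty.mp hempty))
    choose x hx using hpos
    set l := Finset.sup (Finset.range (n + 1)) x with hl
    refine ⟨(X n ∩ Set.Iic l) ∪ x '' {m | m ≤ n}, ⟨n, l, ?_, ?_, ?_⟩, ?_⟩
    · rintro y (⟨-, hy⟩ | ⟨m, hm, rfl⟩)
      · exact hy
      · exact Set.mem_Iic.mpr (Finset.le_sup (Finset.mem_range.mpr (Nat.lt_succ_of_le hm)))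
    · intro m hm
      exact ⟨x m, Or.inr ⟨m, hm, rfl⟩, (hx m).1⟩
    · exact Set.subset_union_left
    · apply Set.eq_empty_iff_forall_notMem.mpr
      rintro y ⟨hyF, hyA⟩
      rcases hyF with ⟨hy1, -⟩ | ⟨m, -, rfl⟩
      · have : y ∈ A ∩ X n := ⟨hyA, hy1⟩
        rw [hn] at this
        exact this
      · exact (hx m).2 hyA
  obtain ⟨Y, hY𝒳, hYinf, hYI⟩ := hss 𝒳 hmem havoid
  obtain ⟨n₀, hn₀⟩ := hmiss _ hYI
  have hw : ∀ F : Set ℕ, F ∈ Y → ∃ p : ℕ × ℕ, p.1 < n₀ ∧ F ⊆ Set.Iic p.2 ∧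
      X p.1 ∩ Set.Iic p.2 ⊆ F := by
    intro F hF
    obtain ⟨n, l, hsub, hmeets, hball⟩ := hY𝒳 hF
    refine ⟨(n, l), ?_, hsub, hball⟩
    by_contra hle
    push_neg at hle
    obtain ⟨y, hy⟩ := hmeets n₀ hle
    have hmem' : y ∈ (⋃₀ Y) ∩ X n₀ := ⟨Set.mem_sUnion.mpr ⟨F, hF, hy.1⟩, hy.2⟩
    rw [hn₀] at hmem'
    exact hmem'
  haveI hZinf : Infinite ↥Y := hYinf.to_subtype
  let q : ↥Y → ℕ × ℕ := fun F => Classical.choose (hw F.1 F.2)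
  have hq : ∀ F : ↥Y, (q F).1 < n₀ ∧ F.1 ⊆ Set.Iic (q F).2 ∧
      X (q F).1 ∩ Set.Iic (q F).2 ⊆ F.1 := fun F => Classical.choose_spec (hw F.1 F.2)
  let f : ↥Y → Fin n₀ := fun F => ⟨(q F).1, (hq F).1⟩
  obtain ⟨k, hk⟩ := Finite.exists_infinite_fiber f
  have hub : ∀ M : ℕ, ∃ F : ↥Y, f F = k ∧ M ≤ (q F).2 := by
    intro M
    by_contra hb
    push_neg at hb
    have hfs : {s : Set ℕ | s ⊆ Set.Iic M}.Finite := (Set.finite_Iic M).finite_subsets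
    haveI := hfs.to_subtype
    have hinj : Function.Injective
        (fun F : ↥(f ⁻¹' {k}) =>
          (⟨F.1.1, by
            intro y hy
            have h1 := (hq F.1).2.1 hy
            have h2 := hb F.1 F.2
            exact le_trans h1 (le_of_lt h2)⟩ : ↥{s : Set ℕ | s ⊆ Set.Iic M})) := by
      intro F G hFG
      have h' : F.1.1 = G.1.1 :=
        congrArg (fun r : {s : Set ℕ // s ⊆ Set.Iic M} => r.1) hFG
      exact Subtype.ext (Subtype.ext h')
    haveI := hk
    haveI := Finite.of_injective _ hinj
    exact not_finite ↥(f ⁻¹' {k})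
  have hsubB : X k.1 ⊆ ⋃₀ Y := by
    intro z hz
    obtain ⟨F, hfk, hM⟩ := hub z
    have hk1 : (q F).1 = k.1 := congrArg Fin.val hfk
    have hz' : z ∈ X (q F).1 ∩ Set.Iic (q F).2 := by
      constructor
      · rw [hk1]; exact hz
      · exact hM
    exact Set.mem_sUnion.mpr ⟨F.1, F.2, (hq F).2.2 hz'⟩
  exact hX k.1 (hdown _ hYI _ hsubB)
end

section
/- Tightness is upward closed in the Katětov order: if I ≤_K J and I is tight, then J is tight. Similarly for weak tightness. -/
def WeaklyTight {α : Type*} (I : Set (Set α)) : Prop :=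
  ∀ X : ℕ → Set α, (∀ n, X n ∉ I) →
    ∃ A ∈ I, {n : ℕ | (A ∩ X n).Infinite}.Infinite

/-- Tightness and weak tightness are upward closed in the Katětov order. -/
theorem tight_katetov_upward (I J : Set (Set ℕ))
    (hI : IsIdealOn I) (hJ : IsIdealOn J) (hK : KatetovLE I J) :
    (Tight I → Tight J) ∧ (WeaklyTight I → WeaklyTight J) := by
  obtain ⟨f, hf⟩ := hK
  have hpos : ∀ X : Set ℕ, X ∉ J → f '' X ∉ I := by
    intro X hX hIm
    exact hX (hJ.1 _ (hf _ hIm) X (fun x hx => Set.mem_preimage.2 ⟨x, hx, rfl⟩))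
  have himg : ∀ (A : Set ℕ) (X : Set ℕ), f '' (f ⁻¹' A ∩ X) = A ∩ f '' X := by
    intro A X
    ext a
    constructor
    · rintro ⟨x, ⟨hxA, hxX⟩, rfl⟩; exact ⟨hxA, x, hxX, rfl⟩
    · rintro ⟨haA, x, hxX, rfl⟩; exact ⟨x, ⟨haA, hxX⟩, rfl⟩
  constructor
  · intro hT X hX
    obtain ⟨A, hA, hmeet⟩ := hT (fun n => f '' X n) (fun n => hpos _ (hX n))
    refine ⟨f ⁻¹' A, hf _ hA, fun n => ?_⟩
    obtain ⟨a, haA, x, hxX, rfl⟩ := hmeet n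
    exact ⟨x, haA, hxX⟩
  · intro hT X hX
    obtain ⟨A, hA, hinf⟩ := hT (fun n => f '' X n) (fun n => hpos _ (hX n))
    refine ⟨f ⁻¹' A, hf _ hA, Set.Infinite.mono ?_ hinf⟩
    intro n hn
    have : (f '' (f ⁻¹' A ∩ X n)).Infinite := by rw [himg]; exact hn
    exact fun hfin => this (hfin.image f)
end

section
/- A MAD family A is strongly tight if and only if: whenever {B_n : n ∈ ω} are infinite subsets of ω such that there exist A_n ∈ A with B_n ⊆ A_n for all n and each A ∈ A equals A_n for only finitely many n, then there exists A ∈ I(A) with A ∩ B_n ≠ ∅ for all n. -/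
/-- An almost disjoint family: an infinite family of infinite subsets of ω
with pairwise finite intersections. -/
def IsADFamily (𝒜 : Set (Set ℕ)) : Prop :=
  𝒜.Infinite ∧ (∀ A ∈ 𝒜, A.Infinite) ∧
  ∀ A ∈ 𝒜, ∀ B ∈ 𝒜, A ≠ B → (A ∩ B).Finite

/-- A MAD family: a maximal almost disjoint family. -/
def IsMADFamily (𝒜 : Set (Set ℕ)) : Prop :=
  IsADFamily 𝒜 ∧ ∀ X : Set ℕ, X.Infinite → ∃ A ∈ 𝒜, (X ∩ A).Infinite

/-- The ideal generated by the family `𝒜` together with the finite sets. -/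
def idealOf (𝒜 : Set (Set ℕ)) : Set (Set ℕ) :=
  {B | ∃ F : Set (Set ℕ), F ⊆ 𝒜 ∧ F.Finite ∧ (B \ ⋃₀ F).Finite}

/-- Strong tightness of an ideal. -/
def StronglyTight (I : Set (Set ℕ)) : Prop :=
  ∀ X : ℕ → Set ℕ, (∀ n, (X n).Infinite) →
    (∀ Y ∈ I, {n : ℕ | (X n \ Y).Finite}.Finite) →
    ∃ A ∈ I, ∀ n, (A ∩ X n).Nonempty

/-! Both directions reduce strong tightness to choosing `A n ∈ 𝒜` meeting `X n` in an infinite set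
with every `A ∈ 𝒜` chosen only finitely often. Almost disjointness turns `B n ⊆* ⋃₀ F` into
`A n ∈ F`, which gives the forward direction. Conversely, maximality shows that
`C n = {A ∈ 𝒜 | (X n ∩ A).Infinite}` can lie inside a finite `F ⊆ 𝒜` only when `X n ⊆* ⋃₀ F`,
hence for only finitely many `n`; and any sequence of nonempty sets `C n` with this property admits
a selection with finite fibers. -/

open Set

section Selection

variable {α : Type*}

/-- `a ∈ s` is new at stage `n` of `g` (the case `k = n`), or else it is the member of `s` whose
first occurrence `k` in `g` is latest. -/
def IsLatestChoice (s : Set α) (g : ℕ → α) (n : ℕ) (a : α) : Prop :=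
  a ∈ s ∧ ∃ k ≤ n, a ∉ g '' Iio k ∧ (k < n → s ⊆ g '' Iic k)

theorem Set.Nonempty.exists_isLatestChoice {s : Set α} (hs : s.Nonempty) (g : ℕ → α) (n : ℕ) :
    ∃ a, IsLatestChoice s g n a := by
  classical
  set k := Nat.findGreatest (fun k => ¬ s ⊆ g '' Iio k) n
  have hk : ¬ s ⊆ g '' Iio k :=
    Nat.findGreatest_spec (P := fun k => ¬ s ⊆ g '' Iio k) (Nat.zero_le n)
      (by simpa using hs.ne_empty)
  obtain ⟨a, has, hag⟩ := not_subset.1 hk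
  refine ⟨a, has, k, Nat.findGreatest_le n, hag, fun hkn => ?_⟩
  rw [← Set.Iio_add_one_eq_Iic]
  exact not_not.1 (Nat.findGreatest_is_greatest (Nat.lt_succ_self k) hkn)

theorem IsLatestChoice.congr {s : Set α} {g g' : ℕ → α} {n : ℕ} {a : α}
    (h : IsLatestChoice s g n a) (hg : EqOn g g' (Iio n)) : IsLatestChoice s g' n a := by
  obtain ⟨has, k, hkn, hak, hs⟩ := h
  refine ⟨has, k, hkn, ?_, fun hk => ?_⟩
  · rwa [← (hg.mono (Iio_subset_Iio hkn)).image_eq]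
  · rw [← (hg.mono (Iic_subset_Iio.2 hk)).image_eq]
    exact hs hk

noncomputable def latestChoiceSeq (C : ℕ → Set α) (hC : ∀ n, (C n).Nonempty) (n : ℕ) : α :=
  Classical.choose <| (hC n).exists_isLatestChoice
    (fun m => if _ : m < n then latestChoiceSeq C hC m else (hC m).some) n

theorem isLatestChoice_latestChoiceSeq (C : ℕ → Set α) (hC : ∀ n, (C n).Nonempty) (n : ℕ) :
    IsLatestChoice (C n) (latestChoiceSeq C hC) n (latestChoiceSeq C hC n) := by
  rw [latestChoiceSeq]
  refine (Classical.choose_spec ((hC n).exists_isLatestChoice _ n)).congr fun m hm => ?_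
  simp [mem_Iio.1 hm]

/-- A fiber of `f` is contained in `Iic j ∪ {n | C n ⊆ f '' Iic j}` for any `j` in it. -/
theorem finite_fiber_of_isLatestChoice {C : ℕ → Set α}
    (hC : ∀ F : Set α, F.Finite → {n | C n ⊆ F}.Finite) {f : ℕ → α}
    (hf : ∀ n, IsLatestChoice (C n) f n (f n)) (a : α) : {n | f n = a}.Finite := by
  rcases eq_empty_or_nonempty {n | f n = a} with h | ⟨j, hj⟩
  · simp [h]
  refine ((finite_Iic j).union (hC _ ((finite_Iic j).image f))).subset fun n hn => ?_
  obtain ⟨-, k, hkn, hak, hexhaust⟩ := hf n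
  have hkj : k ≤ j := by
    by_contra! hjk
    exact hak ⟨j, hjk, hj.trans hn.symm⟩
  rcases hkn.lt_or_eq with hk | rfl
  · exact Or.inr ((hexhaust hk).trans (image_mono (Iic_subset_Iic.2 hkj)))
  · exact Or.inl hkj

theorem exists_selection_finite_fibers (C : ℕ → Set α) (hne : ∀ n, (C n).Nonempty)
    (hfin : ∀ F : Set α, F.Finite → {n | C n ⊆ F}.Finite) :
    ∃ f : ℕ → α, (∀ n, f n ∈ C n) ∧ ∀ a, {n | f n = a}.Finite :=
  ⟨latestChoiceSeq C hne, fun n => (isLatestChoice_latestChoiceSeq C hne n).1,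
    finite_fiber_of_isLatestChoice hfin (isLatestChoice_latestChoiceSeq C hne)⟩

end Selection

theorem exists_infinite_inter_of_finite_diff_sUnion {α : Type*} {B : Set α} {F : Set (Set α)}
    (hB : B.Infinite) (hF : F.Finite) (hBF : (B \ ⋃₀ F).Finite) : ∃ A ∈ F, (B ∩ A).Infinite := by
  by_contra! h
  refine hB ((hBF.union (hF.biUnion h)).subset fun x hxB => ?_)
  by_cases hx : x ∈ ⋃₀ F
  · obtain ⟨A, hA, hxA⟩ := hx
    exact Or.inr (mem_biUnion hA ⟨hxB, hxA⟩)
  · exact Or.inl ⟨hxB, hx⟩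

theorem sUnion_mem_idealOf {𝒜 F : Set (Set ℕ)} (hF𝒜 : F ⊆ 𝒜) (hF : F.Finite) :
    ⋃₀ F ∈ idealOf 𝒜 :=
  ⟨F, hF𝒜, hF, by simp⟩

theorem exists_mem_idealOf_inter_nonempty_of_stronglyTight {𝒜 : Set (Set ℕ)}
    (hAD : ∀ A ∈ 𝒜, ∀ B ∈ 𝒜, A ≠ B → (A ∩ B).Finite) (hST : StronglyTight (idealOf 𝒜))
    (B A : ℕ → Set ℕ) (hB : ∀ n, (B n).Infinite) (hA : ∀ n, A n ∈ 𝒜 ∧ B n ⊆ A n)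
    (hfib : ∀ A' ∈ 𝒜, {n | A n = A'}.Finite) : ∃ C ∈ idealOf 𝒜, ∀ n, (C ∩ B n).Nonempty := by
  refine hST B hB fun Y ⟨F, hF𝒜, hF, hYF⟩ =>
    (hF.biUnion fun A' hA' => hfib A' (hF𝒜 hA')).subset fun n hn => ?_
  obtain ⟨A', hA'F, hinf⟩ := exists_infinite_inter_of_finite_diff_sUnion (hB n) hF
    ((hn.union hYF).subset (sdiff_triangle _ Y _))
  refine mem_biUnion hA'F (by_contra fun hne => hinf ?_)
  exact (hAD _ (hA n).1 _ (hF𝒜 hA'F) hne).subset (inter_subset_inter_left _ (hA n).2)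

theorem finite_diff_sUnion_of_subset {𝒜 F : Set (Set ℕ)}
    (hmax : ∀ X : Set ℕ, X.Infinite → ∃ A ∈ 𝒜, (X ∩ A).Infinite) {X : Set ℕ}
    (hF : {A ∈ 𝒜 | (X ∩ A).Infinite} ⊆ F) : (X \ ⋃₀ F).Finite := by
  by_contra hinf
  obtain ⟨A, hA𝒜, hA⟩ := hmax _ hinf
  have hAF : A ∈ F := hF ⟨hA𝒜, hA.mono (inter_subset_inter_left _ sdiff_subset)⟩
  obtain ⟨x, ⟨-, hx⟩, hxA⟩ := hA.nonempty
  exact hx ⟨A, hAF, hxA⟩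

theorem stronglyTight_idealOf_of_forall_finite_fibers {𝒜 : Set (Set ℕ)}
    (hmax : ∀ X : Set ℕ, X.Infinite → ∃ A ∈ 𝒜, (X ∩ A).Infinite)
    (h : ∀ B : ℕ → Set ℕ, (∀ n, (B n).Infinite) →
        (∃ A' : ℕ → Set ℕ, (∀ n, A' n ∈ 𝒜 ∧ B n ⊆ A' n) ∧ ∀ A ∈ 𝒜, {n : ℕ | A' n = A}.Finite) →
        ∃ C ∈ idealOf 𝒜, ∀ n, (C ∩ B n).Nonempty) :
    StronglyTight (idealOf 𝒜) := by
  intro X hX hXI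
  obtain ⟨f, hf, hfib⟩ := exists_selection_finite_fibers (fun n => {A ∈ 𝒜 | (X n ∩ A).Infinite})
    (fun n => hmax _ (hX n))
    (fun F hF => (hXI _ (sUnion_mem_idealOf inter_subset_right (hF.inter_of_left 𝒜))).subset
      fun n hn => finite_diff_sUnion_of_subset hmax (subset_inter hn fun _ hA => hA.1))
  obtain ⟨C, hC, hCX⟩ := h (fun n => X n ∩ f n) (fun n => (hf n).2)
    ⟨f, fun n => ⟨(hf n).1, inter_subset_right⟩, fun A _ => hfib A⟩
  exact ⟨C, hC, fun n => (hCX n).mono (inter_subset_inter_right _ inter_subset_left)⟩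

/-- Characterization of strongly tight MAD families. -/
theorem stronglyTight_mad_iff (𝒜 : Set (Set ℕ)) (hmad : IsMADFamily 𝒜) :
    StronglyTight (idealOf 𝒜) ↔
      ∀ B : ℕ → Set ℕ, (∀ n, (B n).Infinite) →
        (∃ A' : ℕ → Set ℕ, (∀ n, A' n ∈ 𝒜 ∧ B n ⊆ A' n) ∧
          ∀ A ∈ 𝒜, {n : ℕ | A' n = A}.Finite) →
        ∃ C ∈ idealOf 𝒜, ∀ n, (C ∩ B n).Nonempty :=
  ⟨fun hST _ hB ⟨_, hA, hfib⟩ =>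
      exists_mem_idealOf_inter_nonempty_of_stronglyTight hmad.1.2.2 hST _ _ hB hA hfib,
    stronglyTight_idealOf_of_forall_finite_fibers hmad.2⟩
end

section
/- If A is a strongly tight MAD family, then the dominating number 𝔡 is at most the cardinality of A. -/
/-- The dominating number 𝔡: the least cardinality of a family of functions
dominating (mod finite) every function `ℕ → ℕ`. -/
noncomputable def domNumber : Cardinal :=
  sInf {c : Cardinal | ∃ D : Set (ℕ → ℕ), Cardinal.mk ↥D = c ∧
    ∀ f : ℕ → ℕ, ∃ g ∈ D, ∀ᶠ n in Filter.atTop, f n ≤ g n}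

/-!
Enumerate distinct members `B 0, B 1, …` of `𝒜`. Given `f`, the sets
`X n = {m ∈ B n | max (f n) n < m}` are almost contained in a member of the ideal only for
finitely many `n`, so strong tightness yields `A ∈ I(𝒜)` meeting every `X n`. As `A ⊆* ⋃ F`
for a finite `F ⊆ 𝒜`, a witness `m ∈ A ∩ X n` with `n` large exceeds every element of the finite
set `A \ ⋃ F`, so it lies in `B n ∩ ⋃ F`, which is finite by almost disjointness once
`B n ∉ F`; hence `f n < m ≤ max (B n ∩ ⋃ F)`. So the functions `n ↦ max (B n ∩ ⋃ F)`, one for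
each finite `F ⊆ 𝒜`, form a dominating family.
-/

open Set Filter Cardinal

lemma domNumber_le_mk {D : Set (ℕ → ℕ)} (hD : ∀ f : ℕ → ℕ, ∃ g ∈ D, ∀ᶠ n in atTop, f n ≤ g n) :
    domNumber ≤ #D :=
  csInf_le' ⟨D, rfl, hD⟩

lemma mk_setOf_subset_finite_le {α : Type*} {s : Set α} (hs : s.Infinite) :
    #{F : Set α | F ⊆ s ∧ F.Finite} ≤ #s := by
  have : Infinite s := hs.to_subtype
  have hsub : {F : Set α | F ⊆ s ∧ F.Finite} ⊆
      range fun F : Finset s => Subtype.val '' (F : Set s) := by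
    rintro F ⟨hF, hFfin⟩
    exact ⟨(hFfin.preimage Subtype.val_injective.injOn).toFinset, by simp [hF]⟩
  calc #{F : Set α | F ⊆ s ∧ F.Finite}
      ≤ #(range fun F : Finset s => Subtype.val '' (F : Set s)) := mk_le_mk_of_subset hsub
    _ ≤ #(Finset s) := mk_range_le
    _ = #s := mk_finset_of_infinite s

lemma StronglyTight.exists_mem_inter_gt {I : Set (Set ℕ)} (hI : StronglyTight I)
    {B : ℕ → Set ℕ} (hB : ∀ n, (B n).Infinite)
    (hBI : ∀ Y ∈ I, {n | (B n \ Y).Finite}.Finite) (f : ℕ → ℕ) :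
    ∃ A ∈ I, ∀ n, ∃ m ∈ A ∩ B n, f n < m := by
  obtain ⟨A, hA, hmeet⟩ := hI (fun n => B n \ Iic (f n)) (fun n => (hB n).sdiff (finite_Iic _))
    fun Y hY => (hBI Y hY).subset fun n (hn : ((B n \ Iic (f n)) \ Y).Finite) =>
      (sdiff_sdiff_comm ▸ hn).of_sdiff (finite_Iic _)
  refine ⟨A, hA, fun n => ?_⟩
  obtain ⟨m, hmA, hmB, hm⟩ := hmeet n
  exact ⟨m, ⟨hmA, hmB⟩, not_le.1 hm⟩

namespace IsADFamily

variable {𝒜 : Set (Set ℕ)} {F : Set (Set ℕ)}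

lemma inter_sUnion_finite (h𝒜 : IsADFamily 𝒜) {B : Set ℕ} (hB : B ∈ 𝒜) (hF : F ⊆ 𝒜)
    (hFfin : F.Finite) (hBF : B ∉ F) : (B ∩ ⋃₀ F).Finite := by
  refine (hFfin.biUnion fun A hA =>
    h𝒜.2.2 B hB A (hF hA) (ne_of_mem_of_not_mem hA hBF).symm).subset ?_
  rintro m ⟨hmB, A, hA, hmA⟩
  exact mem_biUnion hA ⟨hmB, hmA⟩

lemma mem_of_sdiff_sUnion_finite (h𝒜 : IsADFamily 𝒜) {B : Set ℕ} (hB : B ∈ 𝒜) (hF : F ⊆ 𝒜)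
    (hFfin : F.Finite) (hBF : (B \ ⋃₀ F).Finite) : B ∈ F := by
  by_contra hBF'
  exact h𝒜.2.1 B hB <| (hBF.union (h𝒜.inter_sUnion_finite hB hF hFfin hBF')).subset
    (sdiff_union_inter B _).ge

lemma finite_setOf_sdiff_finite (h𝒜 : IsADFamily 𝒜) {B : ℕ → Set ℕ} (hB : ∀ n, B n ∈ 𝒜)
    (hBinj : Function.Injective B) {Y : Set ℕ} (hY : Y ∈ idealOf 𝒜) :
    {n | (B n \ Y).Finite}.Finite := by
  obtain ⟨F, hF, hFfin, hYF⟩ := hY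
  refine (hFfin.preimage hBinj.injOn).subset fun n hn =>
    h𝒜.mem_of_sdiff_sUnion_finite (hB n) hF hFfin ?_
  exact ((hn : (B n \ Y).Finite).union hYF).subset (sdiff_triangle _ _ _)

lemma exists_finite_eventually_le (h𝒜 : IsADFamily 𝒜) (hst : StronglyTight (idealOf 𝒜))
    {B : ℕ → Set ℕ} (hB : ∀ n, B n ∈ 𝒜) (hBinj : Function.Injective B) (f : ℕ → ℕ) :
    ∃ F ⊆ 𝒜, F.Finite ∧ ∀ᶠ n in atTop, f n ≤ sSup (B n ∩ ⋃₀ F) := by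
  obtain ⟨A, ⟨F, hF, hFfin, hAF⟩, hAB⟩ := hst.exists_mem_inter_gt (fun n => h𝒜.2.1 _ (hB n))
    (fun Y hY => h𝒜.finite_setOf_sdiff_finite hB hBinj hY) fun n => max (f n) n
  refine ⟨F, hF, hFfin, ?_⟩
  have hBF : ∀ᶠ n in atTop, B n ∉ F := by
    rw [← Nat.cofinite_eq_atTop]
    exact (hFfin.preimage hBinj.injOn).eventually_cofinite_notMem
  filter_upwards [hBF, eventually_gt_atTop (sSup (A \ ⋃₀ F))] with n hnF hAn
  obtain ⟨m, ⟨hmA, hmB⟩, hm⟩ := hAB n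
  by_cases hmF : m ∈ ⋃₀ F
  · have hmle : m ≤ sSup (B n ∩ ⋃₀ F) :=
      le_csSup (h𝒜.inter_sUnion_finite (hB n) hF hFfin hnF).bddAbove ⟨hmB, hmF⟩
    omega
  · have hmle : m ≤ sSup (A \ ⋃₀ F) := le_csSup hAF.bddAbove ⟨hmA, hmF⟩
    omega

end IsADFamily

/-- If `𝒜` is a strongly tight MAD family then `𝔡 ≤ |𝒜|`. -/
theorem domNumber_le_of_stronglyTight (𝒜 : Set (Set ℕ))
    (hmad : IsMADFamily 𝒜) (hst : StronglyTight (idealOf 𝒜)) :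
    domNumber ≤ Cardinal.mk ↥𝒜 := by
  obtain ⟨h𝒜, -⟩ := hmad
  have : Infinite 𝒜 := h𝒜.1.to_subtype
  let e := Infinite.natEmbedding 𝒜
  let D : Set (ℕ → ℕ) :=
    (fun F n => sSup ((e n : Set ℕ) ∩ ⋃₀ F)) '' {F | F ⊆ 𝒜 ∧ F.Finite}
  have hD : ∀ f : ℕ → ℕ, ∃ g ∈ D, ∀ᶠ n in atTop, f n ≤ g n := fun f => by
    obtain ⟨F, hF, hFfin, hfF⟩ := h𝒜.exists_finite_eventually_le hst (fun n => (e n).2)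
      (Subtype.val_injective.comp e.injective) f
    exact ⟨_, mem_image_of_mem _ ⟨hF, hFfin⟩, hfF⟩
  calc domNumber ≤ #D := domNumber_le_mk hD
    _ ≤ #{F : Set (Set ℕ) | F ⊆ 𝒜 ∧ F.Finite} := mk_image_le
    _ ≤ #𝒜 := mk_setOf_subset_finite_le h𝒜.1
end

section
/- Player II has a winning strategy in the Laflamme game L(WT), where in round n Player I plays A_n ∈ WT and Player II responds with a finite set s_n ⊆ (ω×ω) \ A_n, Player II winning if ⋃ s_n ∈ WT^+. Consequently WT is strictly below fin×fin in the Katětov order. -/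
/-- fin×fin transferred to ω via the pairing function: `A` belongs to this
ideal iff all but finitely many of the sections `{m | pair k m ∈ A}` are
finite. This is the fixed copy of fin×fin used on each column. -/
def finTimesFinCoded : Set (Set ℕ) :=
  {A | {k : ℕ | {m : ℕ | Nat.pair k m ∈ A}.Infinite}.Finite}

/-- The ideal `WT` on ω×ω: `A ∈ WT` iff every column section of `A` belongs
to the fixed copy of fin×fin, and all but finitely many column sections of
`A` are finite. -/
def WT : Set (Set (ℕ × ℕ)) :=
  {A | (∀ n : ℕ, {m : ℕ | (n, m) ∈ A} ∈ finTimesFinCoded) ∧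
       {n : ℕ | {m : ℕ | (n, m) ∈ A}.Infinite}.Finite}

/-!
Player II answers `A n` by one point `(k, m)` with `m ≥ n` in each column `k ≤ n`; such a point
exists because each column of `A n` lies in a copy of fin×fin, so it has a finite section and
misses points arbitrarily high. The union of her moves then has every column infinite, so it is
not even in fin×fin ⊇ WT.

Any winning strategy of II in `L(J)` rules out a Katětov reduction `f` of fin×fin to `J`:
against Player I playing `f ⁻¹' {p | p.1 ≤ n}`, the image under `f` of II's `n`-th move lies in
the columns `> n`, so each column of the image of the union meets only finitely many moves and
the image is in fin×fin; the union itself would then be in `J`.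
-/

def IsWinningStrategyII {α : Type*} (I : Set (Set α)) (σ : List (Set α) → Set α) : Prop :=
  ∀ A : ℕ → Set α, (∀ n, A n ∈ I) →
    (∀ n, (σ ((List.range (n + 1)).map A)).Finite ∧
      σ ((List.range (n + 1)).map A) ∩ A n = ∅) ∧
    (⋃ n, σ ((List.range (n + 1)).map A)) ∉ I

lemma setOf_fst_le_mem_finTimesFin (n : ℕ) : {p : ℕ × ℕ | p.1 ≤ n} ∈ finTimesFin := by
  refine (Set.finite_Iic n).subset fun j hj => ?_
  by_contra hjn
  have hempty : {m : ℕ | (j, m) ∈ {p : ℕ × ℕ | p.1 ≤ n}} = ∅ := by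
    ext m
    simpa using hjn
  exact hj (hempty ▸ Set.finite_empty)

lemma iUnion_mem_finTimesFin {F : ℕ → Set (ℕ × ℕ)} (hfin : ∀ n, (F n).Finite)
    (hcol : ∀ n, ∀ p ∈ F n, n < p.1) : (⋃ n, F n) ∈ finTimesFin := by
  suffices h : ∀ j, {m : ℕ | (j, m) ∈ ⋃ n, F n}.Finite by
    exact Set.finite_empty.subset fun j hj => hj (h j)
  intro j
  refine ((Set.finite_Iio j).biUnion fun n _ => (hfin n).image Prod.snd).subset ?_
  intro m hm
  obtain ⟨n, hn⟩ := Set.mem_iUnion.mp hm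
  exact Set.mem_biUnion (hcol n _ hn) ⟨_, hn, rfl⟩

lemma notMem_finTimesFin_of_forall_infinite {X : Set (ℕ × ℕ)}
    (hX : ∀ j, {m : ℕ | (j, m) ∈ X}.Infinite) : X ∉ finTimesFin := fun h =>
  Set.infinite_univ (Set.Finite.subset h fun j _ => hX j)

theorem not_katetovLE_finTimesFin_of_isWinningStrategyII {β : Type*} {J : Set (Set β)}
    (hJ : IsLowerSet J) {σ : List (Set β) → Set β} (hσ : IsWinningStrategyII J σ) :
    ¬ KatetovLE finTimesFin J := by
  rintro ⟨f, hf⟩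
  set A : ℕ → Set β := fun n => f ⁻¹' {p | p.1 ≤ n}
  obtain ⟨hmoves, hpos⟩ := hσ A fun n => hf _ (setOf_fst_le_mem_finTimesFin n)
  set s : ℕ → Set β := fun n => σ ((List.range (n + 1)).map A)
  have hcol : ∀ n, ∀ q ∈ f '' s n, n < q.1 := by
    rintro n _ ⟨p, hp, rfl⟩
    by_contra hle
    have hpA : p ∈ s n ∩ A n := ⟨hp, not_lt.mp hle⟩
    rwa [(hmoves n).2] at hpA
  have himage : f '' (⋃ n, s n) ∈ finTimesFin := by
    rw [Set.image_iUnion]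
    exact iUnion_mem_finTimesFin (fun n => (hmoves n).1.image f) hcol
  exact hpos (hJ (Set.subset_preimage_image f _) (hf _ himage))

lemma WT_subset_finTimesFin : WT ⊆ finTimesFin := fun _ hA => hA.2

lemma isLowerSet_WT : IsLowerSet WT := fun _ _ hBA hA =>
  ⟨fun n => (hA.1 n).subset fun _ hk => hk.mono fun _ hm => hBA hm,
    hA.2.subset fun _ hn => hn.mono fun _ hm => hBA hm⟩

lemma exists_notMem_column_of_mem_WT {A : Set (ℕ × ℕ)} (hA : A ∈ WT) (k n : ℕ) :
    ∃ m, n ≤ m ∧ (k, m) ∉ A := by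
  obtain ⟨j, hj⟩ := (hA.1 k).infinite_compl.nonempty
  obtain ⟨m, hm, hnm⟩ := (Set.not_infinite.mp hj).infinite_compl.exists_gt n
  exact ⟨Nat.pair j m, hnm.le.trans (Nat.right_le_pair j m), hm⟩

noncomputable def escapeHeight (A : Set (ℕ × ℕ)) (n k : ℕ) : ℕ :=
  sInf {m | n ≤ m ∧ (k, m) ∉ A}

lemma escapeHeight_spec {A : Set (ℕ × ℕ)} (hA : A ∈ WT) (n k : ℕ) :
    n ≤ escapeHeight A n k ∧ (k, escapeHeight A n k) ∉ A :=
  Nat.sInf_mem (exists_notMem_column_of_mem_WT hA k n)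

noncomputable def wtResponse (A : Set (ℕ × ℕ)) (n : ℕ) : Set (ℕ × ℕ) :=
  (fun k => (k, escapeHeight A n k)) '' Set.Iic n

noncomputable def wtStrategy (L : List (Set (ℕ × ℕ))) : Set (ℕ × ℕ) :=
  wtResponse (L.getLastD ∅) (L.length - 1)

lemma wtStrategy_history (A : ℕ → Set (ℕ × ℕ)) (n : ℕ) :
    wtStrategy ((List.range (n + 1)).map A) = wtResponse (A n) n := by
  simp [wtStrategy, List.range_succ]

lemma isWinningStrategyII_wtStrategy : IsWinningStrategyII WT wtStrategy := by
  intro A hA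
  simp only [wtStrategy_history]
  refine ⟨fun n => ⟨(Set.finite_Iic n).image _, ?_⟩, ?_⟩
  · refine Set.eq_empty_of_forall_notMem ?_
    rintro _ ⟨⟨k, -, rfl⟩, hk⟩
    exact (escapeHeight_spec (hA n) n k).2 hk
  · refine fun hX =>
      notMem_finTimesFin_of_forall_infinite (fun j => ?_) (WT_subset_finTimesFin hX)
    refine Set.infinite_of_forall_exists_gt fun N => ?_
    set n := max j (N + 1)
    have hmem : (j, escapeHeight (A n) n j) ∈ wtResponse (A n) n :=
      ⟨j, Set.mem_Iic.mpr (le_max_left _ _), rfl⟩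
    refine ⟨escapeHeight (A n) n j, Set.mem_iUnion.mpr ⟨n, hmem⟩, ?_⟩
    have := (escapeHeight_spec (hA n) n j).1
    omega

/-- Player II has a winning strategy in the Laflamme game `L(WT)` (at round
`n` Player I plays `A n ∈ WT` and Player II, following the strategy `σ`
applied to the history `A 0, …, A n`, answers with a finite set disjoint from
`A n`; II wins if the union of her moves is `WT`-positive).  Consequently
`WT` is strictly below fin×fin in the Katětov order. -/
theorem playerII_wins_WT_and_WT_strictly_below_finTimesFin :
    (∃ σ : List (Set (ℕ × ℕ)) → Set (ℕ × ℕ),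
      ∀ A : ℕ → Set (ℕ × ℕ), (∀ n, A n ∈ WT) →
        (∀ n, (σ ((List.range (n + 1)).map A)).Finite ∧
              σ ((List.range (n + 1)).map A) ∩ A n = ∅) ∧
        (⋃ n, σ ((List.range (n + 1)).map A)) ∉ WT) ∧
    KatetovLE WT finTimesFin ∧ ¬ KatetovLE finTimesFin WT :=
  ⟨⟨wtStrategy, isWinningStrategyII_wtStrategy⟩,
    ⟨id, fun _ hA => WT_subset_finTimesFin hA⟩,
    not_katetovLE_finTimesFin_of_isWinningStrategyII isLowerSet_WT isWinningStrategyII_wtStrategy⟩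
end

section
/- Let A be a countable AD family contained in the summable ideal J_{1/n}, and let (X_n) be infinite subsets of ω each contained in some member of A such that each member of A contains X_n for only finitely many n. Then there is D ∈ J_{1/n} almost disjoint from every member of A with D ∩ X_n ≠ ∅ for every n. -/
/-- The summable ideal `J_{1/n} = {A ⊆ ω : Σ_{n ∈ A} 1/(n+1) < ∞}`. -/
def summableIdeal : Set (Set ℕ) :=
  {A | Summable fun n : A => (1 : ℝ) / ((n : ℕ) + 1)}

/-- Let `𝒜` be a countable AD family contained in the summable ideal and let
`(X n)` be infinite sets, each contained in some member of `𝒜`, such that each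
member of `𝒜` contains `X n` for only finitely many `n`.  Then there is
`D` in the summable ideal, almost disjoint from every member of `𝒜`, meeting
every `X n`. -/
theorem summable_stronglyTight_lemma (𝒜 : Set (Set ℕ))
    (hcount : 𝒜.Countable) (had : IsADFamily 𝒜)
    (hsub : 𝒜 ⊆ summableIdeal)
    (X : ℕ → Set ℕ) (hXinf : ∀ n, (X n).Infinite)
    (hXin : ∀ n, ∃ A ∈ 𝒜, X n ⊆ A)
    (hfin : ∀ A ∈ 𝒜, {n : ℕ | X n ⊆ A}.Finite) :
    ∃ D ∈ summableIdeal, (∀ A ∈ 𝒜, (D ∩ A).Finite) ∧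
      ∀ n, (D ∩ X n).Nonempty := by
  classical
  obtain ⟨f, hf⟩ := hcount.exists_eq_range had.1.nonempty
  choose A hA𝒜 hAX using hXin
  have hfmem : ∀ k, f k ∈ 𝒜 := fun k => hf ▸ Set.mem_range_self k
  -- key existence lemma for one step of the recursion
  have key : ∀ n prev, ∃ x, x ∈ X n ∧ prev < x ∧ 2 ^ n ≤ x ∧
      ∀ k < n, f k ≠ A n → x ∉ f k := by
    intro n prev
    have hT : (⋃ k ∈ Finset.range n,
        if f k ≠ A n then A n ∩ f k else ∅ : Set ℕ).Finite := by
      apply Set.Finite.biUnion (Finset.range n).finite_toSet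
      intro k _
      split
      · exact had.2.2 (A n) (hA𝒜 n) (f k) (hfmem k) (Ne.symm ‹_›)
      · exact Set.finite_empty
    obtain ⟨x, hx, hgt⟩ := ((hXinf n).diff hT).exists_gt (max prev (2 ^ n))
    refine ⟨x, hx.1, lt_of_le_of_lt (le_max_left _ _) hgt,
      le_of_lt (lt_of_le_of_lt (le_max_right _ _) hgt), ?_⟩
    intro k hk hne hxf
    exact hx.2 (Set.mem_biUnion (Finset.mem_range.mpr hk)
      (by rw [if_pos hne]; exact ⟨hAX n hx.1, hxf⟩))
  choose g hg using key
  set d : ℕ → ℕ := fun n => Nat.rec (g 0 0) (fun m dm => g (m + 1) dm) n with hd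
  have hdX : ∀ n, d n ∈ X n := by
    intro n; cases n
    · exact (hg 0 0).1
    · exact (hg _ _).1
  have hmono : StrictMono d :=
    strictMono_nat_of_lt_succ fun n => (hg (n + 1) (d n)).2.1
  have h2 : ∀ n, 2 ^ n ≤ d n := by
    intro n; cases n
    · exact (hg 0 0).2.2.1
    · exact (hg _ _).2.2.1
  have hnot : ∀ n, ∀ k < n, f k ≠ A n → d n ∉ f k := by
    intro n; cases n
    · intro k hk; exact absurd hk (Nat.not_lt_zero k)
    · exact (hg _ _).2.2.2
  refine ⟨Set.range d, ?_, ?_, fun n => ⟨d n, ⟨n, rfl⟩, hdX n⟩⟩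
  · -- summable
    rw [summableIdeal, Set.mem_setOf_eq,
      ← (Equiv.ofInjective d hmono.injective).summable_iff]
    simp only [Function.comp_def, Equiv.ofInjective_apply]
    refine Summable.of_nonneg_of_le (fun n => by positivity) (fun n => ?_)
      summable_geometric_two
    have h1 : (2 : ℝ) ^ n ≤ (d n : ℝ) + 1 := by
      have := h2 n
      have : ((2 : ℕ) ^ n : ℝ) ≤ (d n : ℝ) := by exact_mod_cast this
      push_cast at this ⊢
      linarith
    rw [div_pow, one_pow]
    exact div_le_div_of_nonneg_left one_pos.le (by positivity) h1
  · -- almost disjoint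
    intro B hB
    rw [hf] at hB
    obtain ⟨k, rfl⟩ := hB
    have hsubim : Set.range d ∩ f k ⊆ d '' (Set.Iic k ∪ {n | X n ⊆ f k}) := by
      rintro x ⟨⟨n, rfl⟩, hxf⟩
      refine ⟨n, ?_, rfl⟩
      by_cases hnk : n ≤ k
      · exact Or.inl hnk
      · right
        by_cases hne : f k ≠ A n
        · exact absurd hxf (hnot n k (not_le.mp hnk) hne)
        · push_neg at hne
          rw [hne]
          exact hAX n
    exact Set.Finite.subset (Set.Finite.image d
      ((Set.finite_Iic k).union (hfin (f k) (hfmem k)))) hsubim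
end

section
/- Suppose for every f : ω → H(ℵ₀) in V₁ there is g : ω → H(ℵ₀) in V₀ with f(n) = g(n) for infinitely many n, where V₀ ⊆ V₁ are transitive models. Then for every interval partition I = (i_n) in V₁ there is an interval partition J = (j_l) in V₀ such that for infinitely many l there exists n with [i_n, i_{n+1}) ⊆ [j_l, j_{l+1}). -/
/-- Hereditarily finite sets `H(ℵ₀)`, realized as an inductive type: a
hereditarily finite set is coded by a list of its elements. -/
inductive HF : Type where
  | mk : List HF → HF

namespace HF

/-- The list of elements of a hereditarily finite set. -/
def elemList : HF → List HF
  | .mk l => l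

/-- Set-theoretic membership on `HF`. -/
def Mem (a s : HF) : Prop := a ∈ s.elemList

/-- The set of elements of a hereditarily finite set. -/
def elems (s : HF) : Set HF := {a | Mem a s}

/-- The cardinality of a hereditarily finite set. -/
noncomputable def card (s : HF) : ℕ := s.elems.ncard

end HF

/-- An interval partition: a strictly increasing sequence starting at `0`;
its `n`-th block is `[i n, i (n+1))`. -/
def IsIP (i : ℕ → ℕ) : Prop := i 0 = 0 ∧ StrictMono i

/-! ### Auxiliary encoding of naturals and lists of naturals into `HF` -/

/-- Decode a Zermelo numeral (total function). -/
def hfToNat : HF → ℕ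
  | .mk [] => 0
  | .mk (a :: _) => hfToNat a + 1

/-- Zermelo numerals in `HF`. -/
def hfOfNat : ℕ → HF
  | 0 => .mk []
  | n + 1 => .mk [hfOfNat n]

lemma hfToNat_hfOfNat (n : ℕ) : hfToNat (hfOfNat n) = n := by
  induction n with
  | zero => rfl
  | succ n ih => simp [hfOfNat, hfToNat, ih]

/-- Encode a list of naturals as a hereditarily finite set. -/
def hfOfList (L : List ℕ) : HF := .mk (L.map hfOfNat)

/-- Decode a hereditarily finite set into a list of naturals (total). -/
def hfDecode (s : HF) : List ℕ := s.elemList.map hfToNat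

lemma hfDecode_hfOfList (L : List ℕ) : hfDecode (hfOfList L) = L := by
  simp [hfDecode, hfOfList, HF.elemList, List.map_map, Function.comp_def, hfToNat_hfOfNat]

/-- The uniform operation producing an interval partition from `g`. -/
def PhiFun (g : ℕ → HF) : ℕ → ℕ
  | 0 => 0
  | l + 1 =>
    let a := PhiFun g l
    1 + max a ((Finset.range (a + 1)).sup fun k => (hfDecode (g k)).getD a 0)

lemma phiFun_lt_succ (g : ℕ → HF) (l : ℕ) : PhiFun g l < PhiFun g (l + 1) := by
  show PhiFun g l < 1 + max (PhiFun g l) _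
  omega

lemma phiFun_strictMono (g : ℕ → HF) : StrictMono (PhiFun g) :=
  strictMono_nat_of_lt_succ (phiFun_lt_succ g)

lemma phiFun_le_self (g : ℕ → HF) (n : ℕ) : n ≤ PhiFun g n := by
  induction n with
  | zero => exact Nat.zero_le _
  | succ n ih => exact Nat.lt_of_le_of_lt ih (phiFun_lt_succ g n)

lemma phiFun_succ_ge (g : ℕ → HF) (l k : ℕ) (hk : k ≤ PhiFun g l) :
    (hfDecode (g k)).getD (PhiFun g l) 0 < PhiFun g (l + 1) := by
  show _ < 1 + max (PhiFun g l) ((Finset.range (PhiFun g l + 1)).sup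
    fun k => (hfDecode (g k)).getD (PhiFun g l) 0)
  have : (hfDecode (g k)).getD (PhiFun g l) 0 ≤
      (Finset.range (PhiFun g l + 1)).sup fun k => (hfDecode (g k)).getD (PhiFun g l) 0 :=
    Finset.le_sup (f := fun k => (hfDecode (g k)).getD (PhiFun g l) 0)
      (Finset.mem_range.mpr (Nat.lt_succ_of_le hk))
  omega

/-- Model-free form of the block-engulfing lemma: there is a uniform
operation `Φ` such that whenever `F` is a family of functions `ω → H(ℵ₀)`
with the property that every function `ω → H(ℵ₀)` is infinitely often equal
to some member of `F` (so that `F` plays the role of `V₀ ∩ H(ℵ₀)^ω`), then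
for every interval partition `i` there is `g ∈ F` such that `Φ g` is an
interval partition infinitely many of whose blocks completely engulf some
block of `i`. -/
theorem intervalPartition_engulfing :
    ∃ Φ : (ℕ → HF) → (ℕ → ℕ),
      ∀ F : Set (ℕ → HF),
        (∀ f : ℕ → HF, ∃ g ∈ F, {n : ℕ | f n = g n}.Infinite) →
        ∀ i : ℕ → ℕ, IsIP i →
          ∃ g ∈ F, IsIP (Φ g) ∧
            {l : ℕ | ∃ n : ℕ,
              Set.Ico (i n) (i (n + 1)) ⊆ Set.Ico (Φ g l) (Φ g (l + 1))}.Infinite := by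
  refine ⟨PhiFun, ?_⟩
  intro F hF i hi
  obtain ⟨h0, hm⟩ := hi
  have hi_le : ∀ x : ℕ, ∃ m, x ≤ i m := fun x => ⟨x, hm.le_apply⟩
  -- μ x : the least m with x ≤ i m ; ρ x : the right endpoint of the first block at or after x
  set μ : ℕ → ℕ := fun x => Nat.find (hi_le x) with hμdef
  set ρ : ℕ → ℕ := fun x => i (μ x + 1) with hρdef
  have hμ_spec : ∀ x, x ≤ i (μ x) := fun x => Nat.find_spec (hi_le x)
  have hμ_mono : ∀ {x y : ℕ}, x ≤ y → μ x ≤ μ y := by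
    intro x y h
    exact Nat.find_min' (hi_le x) (h.trans (hμ_spec y))
  have hρ_mono : ∀ {x y : ℕ}, x ≤ y → ρ x ≤ ρ y := by
    intro x y h
    exact hm.monotone (Nat.succ_le_succ (hμ_mono h))
  have hρ_lt : ∀ x, x < ρ x := fun x =>
    Nat.lt_of_le_of_lt (hμ_spec x) (hm (Nat.lt_succ_self _))
  -- the function we catch with the i.o.e. family
  set f : ℕ → HF := fun k => hfOfList ((List.range (ρ k + 1)).map ρ) with hfdef
  obtain ⟨g, hgF, hA⟩ := hF f
  refine ⟨g, hgF, ⟨rfl, phiFun_strictMono g⟩, ?_⟩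
  set j : ℕ → ℕ := PhiFun g with hjdef
  -- a block with a big enough jump engulfs
  have engulf : ∀ l, ρ (j l) < j (l + 1) →
      ∃ n, Set.Ico (i n) (i (n + 1)) ⊆ Set.Ico (j l) (j (l + 1)) := by
    intro l hl
    refine ⟨μ (j l), fun x hx => ⟨le_trans (hμ_spec _) hx.1, lt_of_lt_of_le hx.2 ?_⟩⟩
    exact hl.le
  -- main claim: arbitrarily late good blocks
  have main : ∀ L, ∃ l, L ≤ l ∧ ρ (j l) < j (l + 1) := by
    intro L
    obtain ⟨a, haA, ha⟩ := hA.exists_gt (j L)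
    have hexl : ∃ l, a ≤ j l := ⟨a, phiFun_le_self g a⟩
    have hl₀ : a ≤ j (Nat.find hexl) := Nat.find_spec hexl
    have hmin : ∀ l' < Nat.find hexl, j l' < a := fun l' h =>
      Nat.lt_of_not_le (Nat.find_min hexl h)
    have hLl : L < Nat.find hexl := by
      rcases Nat.lt_or_ge L (Nat.find hexl) with h | h
      · exact h
      · have h2 : j (Nat.find hexl) ≤ j L := (phiFun_strictMono g).monotone h
        omega
    obtain ⟨l', hl'⟩ : ∃ l', Nat.find hexl = l' + 1 := ⟨Nat.find hexl - 1, by omega⟩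
    have hl'a : j l' < a := hmin l' (by omega)
    by_cases hgood : ρ (j l') < j (l' + 1)
    · exact ⟨l', by omega, hgood⟩
    · push_neg at hgood
      have hjla : a ≤ j (l' + 1) := by rw [← hl']; exact hl₀
      have hjbound : j (l' + 1) ≤ ρ a := le_trans hgood (hρ_mono hl'a.le)
      refine ⟨l' + 1, by omega, ?_⟩
      -- the true table at `a` certifies a big jump
      have hga : (hfDecode (g a)).getD (j (l' + 1)) 0 = ρ (j (l' + 1)) := by
        have hfa : f a = g a := haA
        rw [← hfa, hfdef]
        simp only
        rw [hfDecode_hfOfList]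
        have hlen : j (l' + 1) < ((List.range (ρ a + 1)).map ρ).length := by
          simp [Nat.lt_succ_of_le hjbound]
        rw [List.getD_eq_getElem _ _ hlen]
        simp
      have := phiFun_succ_ge g (l' + 1) a hjla
      rw [← hjdef] at this
      rw [hga] at this
      exact this
  -- conclude infiniteness
  by_contra hfin
  rw [Set.not_infinite] at hfin
  obtain ⟨b, hb⟩ := hfin.bddAbove
  obtain ⟨l, hLl, hl⟩ := main (b + 1)
  have : l ≤ b := hb (engulf l hl)
  omega
end

section
/- In the forcing P(𝒜) (conditions are pairs p = (s_p, c_p) with s_p a finite subset of ω and c_p : ω → FIN a block sequence above s_p such that every B ∈ I(𝒜) is disjoint from some c_p(i)), the generic set Ȧ = ⋃{s_p : p ∈ Ġ} is forced to have finite intersection with every member of 𝒜; i.e., P(𝒜) diagonalizes 𝒜. Concretely: for every condition p and every B ∈ 𝒜 there is q ≤ p forcing |Ȧ ∩ B| < ℵ₀. -/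
/-- A condition of the forcing `P(𝒜)`: a pair `(s, c)` where `s` is a finite
set, `c` is a block sequence of non-empty finite sets lying above `s`, and
every member of `I(𝒜)` is disjoint from some block of `c`. -/
structure PACond (𝒜 : Set (Set ℕ)) where
  s : Finset ℕ
  c : ℕ → Finset ℕ
  c_nonempty : ∀ i, (c i).Nonempty
  c_blocks : ∀ i, ∀ x ∈ c i, ∀ y ∈ c (i + 1), x < y
  s_below : ∀ x ∈ s, ∀ y ∈ c 0, x < y
  c_pos : ∀ B ∈ idealOf 𝒜, ∃ i, ∀ x ∈ c i, x ∉ B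

/-- The order of `P(𝒜)`: `q ≤ p` iff `s_q ⊇ s_p`, `s_q \ s_p` is a finite
union of blocks of `c_p`, and every block of `c_q` is a finite union of
blocks of `c_p`. -/
def PACond.le {𝒜 : Set (Set ℕ)} (q p : PACond 𝒜) : Prop :=
  p.s ⊆ q.s ∧
  (∃ F : Finset ℕ, q.s \ p.s = F.biUnion p.c) ∧
  ∀ i, ∃ G : Finset ℕ, q.c i = G.biUnion p.c

/-- Blocks of a condition are fully ordered: elements of an earlier block are
below elements of a later block. -/
lemma PACond.blocks_mono {𝒜 : Set (Set ℕ)} (p : PACond 𝒜) :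
    ∀ {i j : ℕ}, i < j → ∀ x ∈ p.c i, ∀ y ∈ p.c j, x < y := by
  intro i j
  induction j with
  | zero => omega
  | succ j ih =>
    intro hij x hx y hy
    rcases Nat.lt_succ_iff_lt_or_eq.mp hij with h | h
    · obtain ⟨z, hz⟩ := p.c_nonempty j
      exact (ih h x hx z hz).trans (p.c_blocks j z hz y hy)
    · exact p.c_blocks j x (h ▸ hx) y hy

lemma idealOf_union {𝒜 : Set (Set ℕ)} {B C : Set ℕ} (hB : B ∈ idealOf 𝒜)
    (hC : C ∈ idealOf 𝒜) : B ∪ C ∈ idealOf 𝒜 := by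
  obtain ⟨F, hF𝒜, hFfin, hFB⟩ := hB
  obtain ⟨G, hG𝒜, hGfin, hGC⟩ := hC
  refine ⟨F ∪ G, Set.union_subset hF𝒜 hG𝒜, hFfin.union hGfin, ?_⟩
  refine (hFB.union hGC).subset ?_
  intro x hx
  rcases hx.1 with h | h
  · exact Or.inl ⟨h, fun hmem => hx.2 (Set.sUnion_mono Set.subset_union_left hmem)⟩
  · exact Or.inr ⟨h, fun hmem => hx.2 (Set.sUnion_mono Set.subset_union_right hmem)⟩

/-- `P(𝒜)` diagonalizes `𝒜`: for every condition `p` and every `B ∈ 𝒜` there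
is `q ≤ p` forcing the generic set `Ȧ = ⋃ {s_r : r ∈ Ġ}` to have finite
intersection with `B`; concretely, every extension `r` of `q` satisfies
`s_r ∩ B ⊆ s_q`, so `q` forces `Ȧ ∩ B ⊆ s_q`, a finite set. -/
theorem PACond_diagonalizes (𝒜 : Set (Set ℕ)) (had : IsADFamily 𝒜)
    (p : PACond 𝒜) (B : Set ℕ) (hB : B ∈ 𝒜) :
    ∃ q : PACond 𝒜, q.le p ∧
      ∀ r : PACond 𝒜, r.le q → ∀ x ∈ r.s, x ∈ B → x ∈ q.s := by
  classical
  -- B is in the ideal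
  have hBideal : B ∈ idealOf 𝒜 := ⟨{B}, by simpa using hB, Set.finite_singleton B, by simp⟩
  -- finite sets are in the ideal
  have hfin : ∀ S : Set ℕ, S.Finite → S ∈ idealOf 𝒜 := fun S hS =>
    ⟨∅, Set.empty_subset _, Set.finite_empty, by simpa using hS⟩
  -- the set of good indices
  set D : ℕ → Prop := fun i => ∀ x ∈ p.c i, x ∉ B with hD
  have hDinf : (setOf D).Infinite := by
    rw [Set.infinite_coe_iff.symm]
    rw [Set.infinite_coe_iff]
    apply Set.infinite_of_not_bddAbove
    rintro ⟨n, hn⟩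
    obtain ⟨i, hi⟩ := p.c_pos (B ∪ ⋃ j ≤ n + 1, (p.c j : Set ℕ))
      (idealOf_union hBideal (hfin _ (Set.Finite.biUnion (Set.finite_Iic _)
        fun j _ => (p.c j).finite_toSet)))
    have hiD : D i := fun x hx hxB => hi x hx (Or.inl hxB)
    have hle : i ≤ n := hn hiD
    obtain ⟨z, hz⟩ := p.c_nonempty i
    exact hi z hz (Or.inr (Set.mem_biUnion (by omega : i ≤ n + 1) hz))
  set f : ℕ → ℕ := Nat.nth D with hf
  have hfmono : StrictMono f := Nat.nth_strictMono hDinf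
  have hfD : ∀ n, D (f n) := Nat.nth_mem_of_infinite hDinf
  refine ⟨⟨p.s, fun i => p.c (f i), fun i => p.c_nonempty _, ?_, ?_, ?_⟩, ?_, ?_⟩
  · intro i x hx y hy
    exact p.blocks_mono (hfmono (Nat.lt_succ_self i)) x hx y hy
  · intro x hx y hy
    obtain ⟨z, hz⟩ := p.c_nonempty 0
    rcases Nat.eq_zero_or_pos (f 0) with h | h
    · exact p.s_below x hx y (h ▸ hy)
    · exact (p.s_below x hx z hz).trans (p.blocks_mono h z hz y hy)
  · intro C hC
    obtain ⟨i, hi⟩ := p.c_pos (B ∪ C) (idealOf_union hBideal hC)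
    have hiD : D i := fun x hx hxB => hi x hx (Or.inl hxB)
    have hfi : f (Nat.count D i) = i := Nat.nth_count hiD
    exact ⟨Nat.count D i, fun x hx hxC => hi x (hfi ▸ hx) (Or.inr hxC)⟩
  · exact ⟨subset_rfl, ⟨∅, by simp⟩, fun i => ⟨{f i}, by simp⟩⟩
  · rintro r ⟨hsub, ⟨F, hFeq⟩, _⟩ x hxr hxB
    by_contra hxq
    have : x ∈ F.biUnion (fun i => p.c (f i)) := by
      rw [← hFeq]; exact Finset.mem_sdiff.mpr ⟨hxr, hxq⟩
    obtain ⟨i, _, hxi⟩ := Finset.mem_biUnion.mp this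
    exact hfD i x hxi hxB
end
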